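/- arXiv:1603.06030 — 2 statements merged into one kernel-verified Lean document; each statement's English description precedes it below -/
import Mathlib

section
/- Let r ≥ 1 and n_1, …, n_r > 1 be integers and let R = ℤ_{n_1} ⊕ ⋯ ⊕ ℤ_{n_r} with multiplicative monoid S_R. Let a, b ∈ R with b dividing a in S_R but a not dividing b, and suppose St(a) = St(b), where for c ∈ R the stabilizer St(c) is the set of units u ∈ Rˣ with u·c = c. Then there exists an index w ∈ [1,r] such that pot_2(gcd(b_w, n_w)) < pot_2(gcd(a_w, n_w)) = pot_2(n_w), where x_i denotes the canonical integer representative in [0, n_i − 1] of the i-th coordinate of x ∈ R. -/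
/-!
For `x : ZMod n` with additive order `m`, a unit fixes `x` exactly when it is `1` modulo `m`, so
the stabilizer of `x` is the kernel of `(ZMod n)ˣ → (ZMod m)ˣ`, of index `φ m`. Choose a
coordinate `w` with `a w ∤ b w`. Since `b w ∣ a w`, the order of `a w` properly divides that of
`b w`, and equal stabilizers give equal totients of the two orders. A proper multiple `M` of `m`
with `φ M = φ m` has `M = 2m` with `m` odd, so the order of `a w` is odd and that of `b w` even;
since `gcd (x.val, n) * addOrderOf x = n`, this is the claimed statement about 2-adic valuations.
-/

theorem Nat.not_two_dvd_and_two_dvd_of_totient_eq {m M : ℕ} (hm : m ≠ 0) (hdvd : m ∣ M)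
    (hne : m ≠ M) (htot : Nat.totient m = Nat.totient M) : ¬ 2 ∣ m ∧ 2 ∣ M := by
  obtain ⟨k, rfl⟩ := hdvd
  have hk : k ≠ 1 := by rintro rfl; exact hne (mul_one m).symm
  obtain ⟨p, hp, hpk⟩ := Nat.exists_prime_and_dvd hk
  have hφ : 0 < Nat.totient m := Nat.totient_pos.mpr (Nat.pos_of_ne_zero hm)
  have hle : Nat.totient (p * m) ≤ Nat.totient m :=
    htot ▸ Nat.le_of_dvd (htot ▸ hφ)
      (Nat.totient_dvd_of_dvd (by rw [mul_comm]; exact mul_dvd_mul_left m hpk))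
  by_cases hpm : p ∣ m
  · rw [Nat.totient_mul_of_prime_of_dvd hp hpm] at hle
    nlinarith [hp.two_le]
  · rw [Nat.totient_mul_of_prime_of_not_dvd hp hpm] at hle
    have hp2 : p = 2 := by
      by_contra h
      have : 2 ≤ p - 1 := by have := hp.two_le; omega
      nlinarith
    subst hp2
    exact ⟨hpm, dvd_mul_of_dvd_right hpk m⟩

namespace ZMod

variable {n : ℕ}

theorem addOrderOf_dvd (x : ZMod n) : addOrderOf x ∣ n :=
  addOrderOf_dvd_of_nsmul_eq_zero (by simp)

theorem mul_eq_zero_iff_addOrderOf_dvd_val [NeZero n] (x y : ZMod n) :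
    x * y = 0 ↔ addOrderOf y ∣ x.val := by
  rw [addOrderOf_dvd_iff_nsmul_eq_zero, nsmul_eq_mul, natCast_zmod_val]

theorem mem_ker_unitsMap_iff {m : ℕ} [NeZero n] (h : m ∣ n) (u : (ZMod n)ˣ) :
    u ∈ (unitsMap h).ker ↔ m ∣ ((u : ZMod n) - 1).val := by
  have : NeZero m := ⟨fun hm => NeZero.ne n (Nat.eq_zero_of_zero_dvd (hm ▸ h))⟩
  rw [MonoidHom.mem_ker, Units.ext_iff, unitsMap_val, Units.val_one, ← sub_eq_zero,
    ← natCast_eq_zero_iff, ← cast_eq_val, cast_sub h, cast_one h]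

theorem unit_mul_eq_self_iff_mem_ker [NeZero n] (x : ZMod n) (u : (ZMod n)ˣ) :
    (u : ZMod n) * x = x ↔ u ∈ (unitsMap x.addOrderOf_dvd).ker := by
  rw [mem_ker_unitsMap_iff, ← mul_eq_zero_iff_addOrderOf_dvd_val, sub_mul, one_mul, sub_eq_zero]

theorem index_ker_unitsMap {m : ℕ} [NeZero n] (h : m ∣ n) :
    (unitsMap h).ker.index = Nat.totient m := by
  have : NeZero m := ⟨fun hm => NeZero.ne n (Nat.eq_zero_of_zero_dvd (hm ▸ h))⟩
  rw [Subgroup.index_ker, MonoidHom.range_eq_top.mpr (unitsMap_surjective h), Subgroup.card_top,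
    Nat.card_eq_fintype_card, card_units_eq_totient]

theorem addOrderOf_dvd_of_dvd {x y : ZMod n} (h : y ∣ x) : addOrderOf x ∣ addOrderOf y := by
  obtain ⟨c, rfl⟩ := h
  exact addOrderOf_dvd_of_nsmul_eq_zero <| by
    rw [← smul_mul_assoc, addOrderOf_nsmul_eq_zero, zero_mul]

theorem dvd_of_dvd_of_addOrderOf_eq [NeZero n] {x y : ZMod n} (h : y ∣ x)
    (hxy : addOrderOf x = addOrderOf y) : x ∣ y := by
  have hle : AddSubgroup.zmultiples x ≤ AddSubgroup.zmultiples y := by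
    obtain ⟨c, rfl⟩ := h
    rw [AddSubgroup.zmultiples_le, ← natCast_zmod_val c, mul_comm, ← nsmul_eq_mul]
    exact AddSubgroup.nsmul_mem _ (AddSubgroup.mem_zmultiples y) _
  have heq := AddSubgroup.eq_of_le_of_card_ge hle <| by
    rw [Nat.card_zmultiples, Nat.card_zmultiples, hxy]
  obtain ⟨k, hk⟩ := AddSubgroup.mem_zmultiples_iff.mp (heq ▸ AddSubgroup.mem_zmultiples y)
  exact ⟨k, by rw [← hk, zsmul_eq_mul, mul_comm]⟩

theorem gcd_val_mul_addOrderOf [NeZero n] (x : ZMod n) :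
    Nat.gcd x.val n * addOrderOf x = n := by
  rw [← natCast_zmod_val x, addOrderOf_coe _ (NeZero.ne n), val_natCast_of_lt (val_lt x),
    Nat.gcd_comm]
  exact Nat.mul_div_cancel' (Nat.gcd_dvd_left _ _)

theorem factorization_two_gcd_of_unit_mul_eq_self_iff [NeZero n] {a b : ZMod n} (hba : b ∣ a)
    (hab : ¬ a ∣ b) (hst : ∀ u : (ZMod n)ˣ, (u : ZMod n) * a = a ↔ (u : ZMod n) * b = b) :
    (Nat.gcd b.val n).factorization 2 < (Nat.gcd a.val n).factorization 2
      ∧ (Nat.gcd a.val n).factorization 2 = n.factorization 2 := by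
  have hker : (unitsMap a.addOrderOf_dvd).ker = (unitsMap b.addOrderOf_dvd).ker := by
    ext u
    rw [← unit_mul_eq_self_iff_mem_ker, ← unit_mul_eq_self_iff_mem_ker]
    exact hst u
  have htot : Nat.totient (addOrderOf a) = Nat.totient (addOrderOf b) := by
    rw [← index_ker_unitsMap a.addOrderOf_dvd, ← index_ker_unitsMap b.addOrderOf_dvd, hker]
  obtain ⟨hodd, heven⟩ := Nat.not_two_dvd_and_two_dvd_of_totient_eq (addOrderOf_pos a).ne'
    (addOrderOf_dvd_of_dvd hba) (fun h => hab (dvd_of_dvd_of_addOrderOf_eq hba h)) htot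
  have hfactor (x : ZMod n) :
      n.factorization 2 = (Nat.gcd x.val n).factorization 2 + (addOrderOf x).factorization 2 := by
    conv_lhs => rw [← gcd_val_mul_addOrderOf x]
    rw [Nat.factorization_mul (Nat.gcd_pos_of_pos_right _ (NeZero.pos n)).ne'
      (addOrderOf_pos x).ne', Finsupp.add_apply]
  have ha := Nat.factorization_eq_zero_of_not_dvd hodd
  have hb := Nat.prime_two.factorization_pos_of_dvd (addOrderOf_pos b).ne' heven
  have := hfactor a
  have := hfactor b
  omega

end ZMod

theorem Pi.mulSingle_mul_eq_self_iff {ι : Type*} [DecidableEq ι] {M : ι → Type*}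
    [∀ i, MulOneClass (M i)] (i : ι) (x : M i) (f : ∀ i, M i) :
    Pi.mulSingle i x * f = f ↔ x * f i = f i := by
  refine ⟨fun h => by simpa using congrFun h i, fun h => funext fun j => ?_⟩
  rcases eq_or_ne j i with rfl | hj
  · simpa using h
  · simp [hj]

theorem exists_coordinate_of_stabilizer_eq_general
    (r : ℕ) (n : Fin r → ℕ) (hn : ∀ i, 1 < n i)
    (a b : (i : Fin r) → ZMod (n i)) (hba : b ∣ a) (hab : ¬ a ∣ b)
    (hst : {u : ((i : Fin r) → ZMod (n i))ˣ | (u : (i : Fin r) → ZMod (n i)) * a = a}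
         = {u : ((i : Fin r) → ZMod (n i))ˣ | (u : (i : Fin r) → ZMod (n i)) * b = b}) :
    ∃ w : Fin r,
      (Nat.gcd ((b w).val) (n w)).factorization 2
          < (Nat.gcd ((a w).val) (n w)).factorization 2
        ∧ (Nat.gcd ((a w).val) (n w)).factorization 2 = (n w).factorization 2 := by
  obtain ⟨w, hw⟩ : ∃ w, ¬ a w ∣ b w := by simpa [pi_dvd_iff] using hab
  have : NeZero (n w) := ⟨(hn w).ne_bot⟩
  refine ⟨w, ZMod.factorization_two_gcd_of_unit_mul_eq_self_iff (pi_dvd_iff.mp hba w) hw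
    fun u => ?_⟩
  have hu := Set.ext_iff.mp hst (Units.map (MonoidHom.mulSingle (fun i => ZMod (n i)) w) u)
  simpa only [Set.mem_ofPred_eq, Units.coe_map, MonoidHom.coe_coe, MonoidHom.mulSingle_apply,
    Pi.mulSingle_mul_eq_self_iff] using hu

theorem exists_coordinate_of_stabilizer_eq
    (r : ℕ) (hr : 1 ≤ r) (n : Fin r → ℕ) (hn : ∀ i, 1 < n i)
    (a b : (i : Fin r) → ZMod (n i)) (hba : b ∣ a) (hab : ¬ a ∣ b)
    (hst : {u : ((i : Fin r) → ZMod (n i))ˣ | (u : (i : Fin r) → ZMod (n i)) * a = a}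
         = {u : ((i : Fin r) → ZMod (n i))ˣ | (u : (i : Fin r) → ZMod (n i)) * b = b}) :
    ∃ w : Fin r,
      (Nat.gcd ((b w).val) (n w)).factorization 2
          < (Nat.gcd ((a w).val) (n w)).factorization 2
        ∧ (Nat.gcd ((a w).val) (n w)).factorization 2 = (n w).factorization 2 :=
  exists_coordinate_of_stabilizer_eq_general r n hn a b hba hab hst
end

section
/- Let r_1, r_2, r_3 be nonnegative integers, not all zero, and let R = ℤ_8^{r_1} ⊕ ℤ_4^{r_2} ⊕ ℤ_2^{r_3} with multiplicative monoid S_R and unit group Rˣ. Then D(S_R) = D(Rˣ) + δ, where δ = r_1 + r_2 + r_3 is the number of coordinates of R whose modulus is even. -/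
/-- The Davenport constant of a finite commutative monoid `S`: the least positive
integer `ℓ` such that every multiset of `ℓ` elements of `S` has a proper sub-multiset
(possibly empty) whose product equals the product of the whole multiset. -/
noncomputable def DavenportM (S : Type*) [CommMonoid S] : ℕ :=
  sInf {ℓ : ℕ | 0 < ℓ ∧ ∀ T : Multiset S, Multiset.card T = ℓ →
    ∃ T' : Multiset S, T' < T ∧ T'.prod = T.prod}

/-- The Davenport constant of a finite abelian group `G`: the least positive integer `ℓ`
such that every multiset of `ℓ` elements of `G` has a nonempty sub-multiset with
product equal to the identity. -/
noncomputable def DavenportG (G : Type*) [CommGroup G] : ℕ :=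
  sInf {ℓ : ℕ | 0 < ℓ ∧ ∀ T : Multiset G, Multiset.card T = ℓ →
    ∃ T' : Multiset G, T' ≤ T ∧ T' ≠ 0 ∧ T'.prod = 1}

/-- The ring `ℤ₈^{r₁} ⊕ ℤ₄^{r₂} ⊕ ℤ₂^{r₃}`. -/
abbrev RingR (r₁ r₂ r₃ : ℕ) : Type :=
  (Fin r₁ → ZMod 8) × (Fin r₂ → ZMod 4) × (Fin r₃ → ZMod 2)


/-!
Write `R = ∏ᵢ ℤ/2^{kᵢ}` with `kᵢ ≤ 3` (here `k = (3, …, 3, 2, …, 2, 1, …, 1)`).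

Every unit of `ℤ/2^k`, `k ≤ 3`, squares to `1`, so `Rˣ` is an `𝔽₂`-vector space of dimension
`∑ᵢ (kᵢ - 1)`. A nonempty sub-multiset with product `1` is a linear relation with `0/1`
coefficients: it exists as soon as there are more elements than the dimension, and a basis has
none. Hence `D(Rˣ) = ∑ᵢ (kᵢ - 1) + 1`.

For the monoid, `D(S_R) = ∑ᵢ kᵢ + 1`. The multiset containing `kᵢ` copies of the element with
`2` at `i` and `1` elsewhere has no proper sub-multiset with the same product, because the
`i`-th coordinate of the product is `2` raised to the number of copies. Conversely, take
`∑ᵢ kᵢ + 1` elements. For every `i`, set aside up to `kᵢ` of them, say `bᵢ`, whose `i`-th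
coordinate is not a unit. Their product is divisible by `2^{bᵢ}` at `i`, so it absorbs any
factor `≡ 1 mod 2^{kᵢ - bᵢ}`. Among the remaining elements, the `i`-th coordinates are units
(unless `bᵢ = kᵢ`, when there is nothing to check). The bound for the elementary abelian
`2`-group `∏ᵢ (ℤ/2^{kᵢ - bᵢ})ˣ` then gives a nonempty sub-multiset whose product is absorbed.
The two constants differ by `∑ᵢ kᵢ - ∑ᵢ (kᵢ - 1)`, the number of coordinates, as all `kᵢ ≥ 1`.
-/

namespace Multiset

variable {α β : Type*}

theorem exists_le_card_eq {s : Multiset α} {n : ℕ} (h : n ≤ card s) :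
    ∃ t ≤ s, card t = n := by
  obtain ⟨t, ht⟩ := exists_mem_of_ne_zero <| card_pos.1 <| by
    rw [card_powersetCard]; exact Nat.choose_pos h
  exact ⟨t, (mem_powersetCard.1 ht).1, (mem_powersetCard.1 ht).2⟩

theorem exists_le_map_eq {f : α → β} {s : Multiset α} {u : Multiset β} (h : u ≤ s.map f) :
    ∃ t ≤ s, t.map f = u := by
  classical
  induction s using Multiset.induction generalizing u with
  | empty => exact ⟨0, le_rfl, (nonpos_iff_eq_zero.1 (by simpa using h)).symm⟩
  | cons a s ih =>
    rw [map_cons] at h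
    by_cases ha : f a ∈ u
    · obtain ⟨u', rfl⟩ := exists_cons_of_mem ha
      obtain ⟨t, hts, rfl⟩ := ih ((cons_le_cons_iff _).1 h)
      exact ⟨a ::ₘ t, cons_le_cons a hts, map_cons f a t⟩
    · obtain ⟨t, hts, rfl⟩ := ih ((le_cons_of_notMem ha).1 h)
      exact ⟨t, hts.trans (le_cons_self s a), rfl⟩

theorem card_finsetSup_le [DecidableEq α] {ι : Type*} (s : Finset ι) (f : ι → Multiset α) :
    card (s.sup f) ≤ ∑ i ∈ s, card (f i) := by
  classical
  induction s using Finset.induction_on with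
  | empty => simp
  | insert i s hi ih =>
    rw [Finset.sup_insert, Finset.sum_insert hi]
    have := congrArg card (union_add_inter (f i) (s.sup f))
    rw [card_add, card_add] at this
    rw [sup_eq_union]
    omega

end Multiset

open Multiset

section Davenport

variable {S S' G G' : Type*} [CommMonoid S] [CommMonoid S'] [CommGroup G] [CommGroup G']

theorem davenportM_eq {n : ℕ}
    (hup : ∀ T : Multiset S, n < card T → ∃ T' < T, T'.prod = T.prod)
    (hlow : ∃ T : Multiset S, card T = n ∧ ∀ T' < T, T'.prod ≠ T.prod) :
    DavenportM S = n + 1 := by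
  classical
  obtain ⟨T, hcard, hfree⟩ := hlow
  have hmem : n + 1 ∈ {ℓ : ℕ | 0 < ℓ ∧ ∀ T : Multiset S, card T = ℓ →
      ∃ T' : Multiset S, T' < T ∧ T'.prod = T.prod} :=
    ⟨n.succ_pos, fun T hT => hup T (by omega)⟩
  refine le_antisymm (Nat.sInf_le hmem) (Nat.succ_le_of_lt ?_)
  obtain ⟨-, hsplit⟩ := Nat.sInf_mem ⟨_, hmem⟩
  by_contra! hle
  obtain ⟨U, hUT, hUcard⟩ := exists_le_card_eq (hcard ▸ hle)
  obtain ⟨U', hU'U, hprod⟩ := hsplit U hUcard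
  -- a proper sub-multiset of `U` with the product of `U` extends to one of `T`
  refine hfree (U' + (T - U)) ?_ ?_
  · simpa only [add_tsub_cancel_of_le hUT] using add_lt_add_of_lt_of_le hU'U (le_refl (T - U))
  · rw [prod_add, hprod, ← prod_add, add_tsub_cancel_of_le hUT]

theorem davenportG_eq {n : ℕ}
    (hup : ∀ T : Multiset G, n < card T → ∃ V ≤ T, V ≠ 0 ∧ V.prod = 1)
    (hlow : ∃ T : Multiset G, card T = n ∧ ∀ V ≤ T, V ≠ 0 → V.prod ≠ 1) :
    DavenportG G = n + 1 := by
  obtain ⟨T, hcard, hfree⟩ := hlow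
  have hmem : n + 1 ∈ {ℓ : ℕ | 0 < ℓ ∧ ∀ T : Multiset G, card T = ℓ →
      ∃ T' : Multiset G, T' ≤ T ∧ T' ≠ 0 ∧ T'.prod = 1} :=
    ⟨n.succ_pos, fun T hT => hup T (by omega)⟩
  refine le_antisymm (Nat.sInf_le hmem) (Nat.succ_le_of_lt ?_)
  obtain ⟨-, hsplit⟩ := Nat.sInf_mem ⟨_, hmem⟩
  by_contra! hle
  obtain ⟨U, hUT, hUcard⟩ := exists_le_card_eq (hcard ▸ hle)
  obtain ⟨V, hVU, hV0, hprod⟩ := hsplit U hUcard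
  exact hfree V (hVU.trans hUT) hV0 hprod

theorem exists_lt_prod_eq_of_mulEquiv (e : S ≃* S') {ℓ : ℕ}
    (h : ∀ T : Multiset S, card T = ℓ → ∃ T' < T, T'.prod = T.prod)
    (T : Multiset S') (hT : card T = ℓ) : ∃ T' < T, T'.prod = T.prod := by
  obtain ⟨T', hlt, hprod⟩ := h (T.map e.symm) (by rwa [card_map])
  refine ⟨T'.map e, by simpa [map_map] using map_lt_map (f := e) hlt, ?_⟩
  rw [prod_hom T' e, hprod, ← prod_hom, map_map]
  simp

theorem exists_le_prod_eq_one_of_mulEquiv (e : G ≃* G') {ℓ : ℕ}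
    (h : ∀ T : Multiset G, card T = ℓ → ∃ V ≤ T, V ≠ 0 ∧ V.prod = 1)
    (T : Multiset G') (hT : card T = ℓ) : ∃ V ≤ T, V ≠ 0 ∧ V.prod = 1 := by
  obtain ⟨V, hle, hV0, hprod⟩ := h (T.map e.symm) (by rwa [card_map])
  refine ⟨V.map e, by simpa [map_map] using map_le_map (f := e) hle, by simpa using hV0, ?_⟩
  rw [prod_hom V e, hprod, map_one]

theorem davenportM_congr (e : S ≃* S') : DavenportM S = DavenportM S' := by
  unfold DavenportM
  congr 1
  ext ℓ
  exact and_congr_right fun _ =>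
    ⟨exists_lt_prod_eq_of_mulEquiv e, exists_lt_prod_eq_of_mulEquiv e.symm⟩

theorem davenportG_congr (e : G ≃* G') : DavenportG G = DavenportG G' := by
  unfold DavenportG
  congr 1
  ext ℓ
  exact and_congr_right fun _ =>
    ⟨exists_le_prod_eq_one_of_mulEquiv e, exists_le_prod_eq_one_of_mulEquiv e.symm⟩

end Davenport

section ElementaryAbelianTwoGroup

variable {G : Type*} [CommGroup G] [Fintype G]

abbrev zmodTwoModule (hG : ∀ x : G, x * x = 1) : Module (ZMod 2) (Additive G) :=
  AddCommGroup.zmodModule fun x => by rw [two_nsmul]; exact hG x.toMul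

theorem card_eq_two_pow_finrank (hG : ∀ x : G, x * x = 1) :
    letI := zmodTwoModule hG
    Fintype.card G = 2 ^ Module.finrank (ZMod 2) (Additive G) := by
  let _ := zmodTwoModule hG
  have h := Module.card_eq_pow_finrank (K := ZMod 2) (V := Additive G)
  rwa [ZMod.card, Fintype.card_congr Additive.toMul] at h

theorem exists_le_prod_eq_one_of_card_lt (hG : ∀ x : G, x * x = 1) (T : Multiset G)
    (hT : Fintype.card G < 2 ^ card T) : ∃ V ≤ T, V ≠ 0 ∧ V.prod = 1 := by
  classical
  let _ := zmodTwoModule hG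
  have hdep : ¬LinearIndependent (ZMod 2) fun x : T => Additive.ofMul (x : G) := by
    intro hli
    have hle := hli.fintype_card_le_finrank
    rw [Multiset.card_coe] at hle
    have := Nat.pow_le_pow_right two_pos hle
    rw [← card_eq_two_pow_finrank hG] at this
    omega
  obtain ⟨g, hg, x, hx⟩ := Fintype.not_linearIndependent_iff.1 hdep
  set s := Finset.univ.filter fun x => g x ≠ 0
  -- a nontrivial relation over `ZMod 2` is a nonempty sum equal to zero
  have hsum : ∑ y ∈ s, Additive.ofMul (y : G) = 0 := by
    rw [← hg, Finset.sum_filter]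
    refine Finset.sum_congr rfl fun y _ => ?_
    split_ifs with hy
    · have h1 : g y = 1 := Fin.eq_one_of_ne_zero (g y) hy
      rw [h1, one_smul]
    · rw [not_not.1 hy, zero_smul]
  refine ⟨s.val.map fun y : T => (y : G), ?_, ?_, ?_⟩
  · conv_rhs => rw [← Multiset.map_univ_coe T]
    exact map_le_map (Finset.val_le_iff.2 (Finset.subset_univ s))
  · intro h0
    rw [Multiset.map_eq_zero, Finset.val_eq_zero] at h0
    exact Finset.eq_empty_iff_forall_notMem.1 h0 x (by simpa [s] using hx)
  · rw [Finset.prod_map_val]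
    simpa using congrArg Additive.toMul hsum

theorem exists_card_eq_forall_le_prod_ne_one (hG : ∀ x : G, x * x = 1) {n : ℕ}
    (hcard : Fintype.card G = 2 ^ n) :
    ∃ T : Multiset G, card T = n ∧ ∀ V ≤ T, V ≠ 0 → V.prod ≠ 1 := by
  classical
  let _ := zmodTwoModule hG
  have hn : Module.finrank (ZMod 2) (Additive G) = n :=
    Nat.pow_right_injective le_rfl ((card_eq_two_pow_finrank hG).symm.trans hcard)
  set b := Module.finBasis (ZMod 2) (Additive G)
  refine ⟨Finset.univ.val.map fun i => (b i).toMul, by simp [hn], fun V hV hV0 hprod => ?_⟩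
  obtain ⟨t, ht, rfl⟩ := exists_le_map_eq hV
  obtain ⟨i, hi⟩ := exists_mem_of_ne_zero (by simpa using hV0 : t ≠ 0)
  have hsum : ∑ j ∈ ⟨t, nodup_of_le ht Finset.univ.nodup⟩, (1 : ZMod 2) • b j = 0 := by
    simpa [Finset.sum_eq_multiset_sum, ← toMul_sum] using congrArg Additive.ofMul hprod
  exact one_ne_zero (linearIndependent_iff'.1 b.linearIndependent _ _ hsum i hi)

theorem davenportG_eq_of_mul_self_eq_one (hG : ∀ x : G, x * x = 1) {n : ℕ}
    (hcard : Fintype.card G = 2 ^ n) : DavenportG G = n + 1 :=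
  davenportG_eq
    (fun T hT => exists_le_prod_eq_one_of_card_lt hG T
      (hcard ▸ Nat.pow_lt_pow_right one_lt_two hT))
    (exists_card_eq_forall_le_prod_ne_one hG hcard)

end ElementaryAbelianTwoGroup

namespace ZMod

variable {k : ℕ}

theorem exists_eq_two_mul_of_not_isUnit {x : ZMod (2 ^ k)} (hx : ¬IsUnit x) :
    ∃ y, x = 2 * y := by
  obtain ⟨m, hm⟩ : 2 ∣ x.val := by
    by_contra h
    rw [← natCast_zmod_val x, isUnit_iff_coprime] at hx
    exact hx (((Nat.Prime.coprime_iff_not_dvd Nat.prime_two).2 h).pow_left k).symm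
  exact ⟨m, by rw [← natCast_zmod_val x, hm]; push_cast; ring⟩

theorem exists_prod_eq_two_pow_mul {B : Multiset (ZMod (2 ^ k))} (hB : ∀ x ∈ B, ¬IsUnit x) :
    ∃ y, B.prod = 2 ^ Multiset.card B * y := by
  induction B using Multiset.induction with
  | empty => exact ⟨1, by simp⟩
  | cons a B ih =>
    obtain ⟨y, hy⟩ := ih fun x hx => hB x (mem_cons_of_mem hx)
    obtain ⟨z, hz⟩ := exists_eq_two_mul_of_not_isUnit (hB a (mem_cons_self a B))
    exact ⟨z * y, by rw [prod_cons, hy, hz, Multiset.card_cons]; ring⟩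

theorem two_pow_self : (2 : ZMod (2 ^ k)) ^ k = 0 := by
  exact_mod_cast natCast_self (2 ^ k)

theorem mul_two_pow_mul_eq_of_castHom_eq_one {b : ℕ} (hb : b ≤ k) {w : ZMod (2 ^ k)}
    (hw : castHom (pow_dvd_pow 2 (Nat.sub_le k b)) (ZMod (2 ^ (k - b))) w = 1)
    (y : ZMod (2 ^ k)) : w * (2 ^ b * y) = 2 ^ b * y := by
  obtain ⟨m, hm⟩ : 2 ^ (k - b) ∣ (w - 1).val := by
    rw [← natCast_eq_zero_iff, ← map_natCast (castHom (pow_dvd_pow 2 (Nat.sub_le k b)) _),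
      natCast_zmod_val, map_sub, hw, map_one, sub_self]
  have hw1 : w = 1 + 2 ^ (k - b) * m := by
    rw [← sub_eq_iff_eq_add', ← natCast_zmod_val (w - 1), hm]
    push_cast
    ring
  have h0 : (2 : ZMod (2 ^ k)) ^ (k - b) * 2 ^ b = 0 := by
    rw [← pow_add, Nat.sub_add_cancel hb, two_pow_self]
  rw [hw1]
  linear_combination (m * y) * h0

theorem two_pow_injOn {a b : ℕ} (ha : a ≤ k) (hb : b ≤ k)
    (h : (2 : ZMod (2 ^ k)) ^ a = 2 ^ b) : a = b := by
  wlog hab : a < b generalizing a b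
  · rcases (not_lt.1 hab).lt_or_eq with hba | rfl
    · exact (this hb ha h.symm hba).symm
    · rfl
  exfalso
  have h' := (natCast_eq_natCast_iff' (2 ^ a) (2 ^ b) (2 ^ k)).1 (by exact_mod_cast h)
  rw [Nat.mod_eq_of_lt (Nat.pow_lt_pow_right one_lt_two (hab.trans_le hb))] at h'
  rcases hb.lt_or_eq with hbk | rfl
  · rw [Nat.mod_eq_of_lt (Nat.pow_lt_pow_right one_lt_two hbk)] at h'
    exact hab.ne (Nat.pow_right_injective le_rfl h')
  · rw [Nat.mod_self] at h'
    exact pow_ne_zero a two_ne_zero h'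

theorem units_mul_self_eq_one (hk : k ≤ 3) (u : (ZMod (2 ^ k))ˣ) : u * u = 1 := by
  interval_cases k <;> revert u <;> decide

theorem card_units_two_pow : Fintype.card (ZMod (2 ^ k))ˣ = 2 ^ (k - 1) := by
  rw [card_units_eq_totient]
  rcases k with _ | n
  · rfl
  · rw [Nat.totient_prime_pow_succ Nat.prime_two]
    simp

end ZMod

open Classical in
noncomputable def unitOrOne {M : Type*} [Monoid M] (x : M) : Mˣ :=
  if h : IsUnit x then h.unit else 1

theorem val_unitOrOne {M : Type*} [Monoid M] {x : M} (h : IsUnit x) :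
    (unitOrOne x : M) = x := by
  rw [unitOrOne, dif_pos h, IsUnit.unit_spec]

theorem Pi.prod_map_mulSingle {ι : Type*} [DecidableEq ι] {M : ι → Type*}
    [∀ i, CommMonoid (M i)] (a : ∀ i, M i) (s : Multiset ι) :
    (s.map fun j => Pi.mulSingle j (a j)).prod = fun i => a i ^ count i s := by
  induction s using Multiset.induction with
  | empty => funext i; simp
  | cons j s ih =>
    funext i
    rw [map_cons, prod_cons, ih, Pi.mul_apply, count_cons]
    by_cases hij : i = j
    · subst hij; simp [pow_succ, mul_comm]
    · simp [hij]

def MulEquiv.sumPiEquivProdPi {α β : Type*} (M : α ⊕ β → Type*) [∀ i, Mul (M i)] :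
    (∀ i, M i) ≃* (∀ a, M (.inl a)) × (∀ b, M (.inr b)) :=
  { Equiv.sumPiEquivProdPi M with map_mul' := fun _ _ => rfl }

section PiZModTwoPow

variable {ι : Type*} {k : ι → ℕ}

theorem exists_prod_apply_eq_two_pow_mul {i : ι} {B U : Multiset (∀ i, ZMod (2 ^ k i))}
    (hBU : B ≤ U) (hB : ∀ x ∈ B, ¬IsUnit (x i)) : ∃ y, U.prod i = 2 ^ card B * y := by
  obtain ⟨y, hy⟩ := ZMod.exists_prod_eq_two_pow_mul (B := B.map (· i)) (by simpa using hB)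
  obtain ⟨C, rfl⟩ := exists_add_of_le hBU
  refine ⟨y * C.prod i, ?_⟩
  rw [prod_add, Pi.mul_apply, Pi.multiset_prod_apply i B, hy, card_map, mul_assoc]

theorem prod_mul_prod_eq_of_castHom_eq_one {V W : Multiset (∀ i, ZMod (2 ^ k i))}
    {B : ι → Multiset (∀ i, ZMod (2 ^ k i))} (hBW : ∀ i, B i ≤ W)
    (hB : ∀ i, ∀ x ∈ B i, ¬IsUnit (x i)) (hBk : ∀ i, card (B i) ≤ k i)
    (hV : ∀ i, ZMod.castHom (pow_dvd_pow 2 (Nat.sub_le (k i) (card (B i))))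
      (ZMod (2 ^ (k i - card (B i)))) (V.prod i) = 1) :
    V.prod * W.prod = W.prod := by
  funext i
  obtain ⟨y, hy⟩ := exists_prod_apply_eq_two_pow_mul (hBW i) (hB i)
  rw [Pi.mul_apply, hy]
  exact ZMod.mul_two_pow_mul_eq_of_castHom_eq_one (hBk i) (hV i) y

variable [Fintype ι]

theorem exists_lt_prod_eq_of_absorbing (hk : ∀ i, k i ≤ 3)
    {T A : Multiset (∀ i, ZMod (2 ^ k i))} {B : ι → Multiset (∀ i, ZMod (2 ^ k i))}
    (hAT : A ≤ T) (hBA : ∀ i, B i ≤ A) (hB : ∀ i, ∀ x ∈ B i, ¬IsUnit (x i))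
    (hBk : ∀ i, card (B i) ≤ k i) (hunit : ∀ x ∈ T - A, ∀ i, card (B i) < k i → IsUnit (x i))
    (hcard : ∑ i, (k i - card (B i)) < card (T - A)) : ∃ T' < T, T'.prod = T.prod := by
  classical
  let f : (∀ i, ZMod (2 ^ k i)) → ∀ i, (ZMod (2 ^ (k i - card (B i))))ˣ := fun x i =>
    unitOrOne (ZMod.castHom (pow_dvd_pow 2 (Nat.sub_le _ _)) _ (x i))
  have hf : ∀ x ∈ T - A, ∀ i, ZMod.castHom (pow_dvd_pow 2 (Nat.sub_le _ _)) _ (x i) =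
      (f x i : ZMod (2 ^ (k i - card (B i)))) := by
    intro x hx i
    refine (val_unitOrOne ?_).symm
    rcases (hBk i).lt_or_eq with hbi | hbi
    · exact (hunit x hx i hbi).map _
    · have : Subsingleton (ZMod (2 ^ (k i - card (B i)))) := by
        rw [hbi, Nat.sub_self, pow_zero]; infer_instance
      exact isUnit_of_subsingleton _
  have hcardG : Fintype.card (∀ i, (ZMod (2 ^ (k i - card (B i))))ˣ) <
      2 ^ card ((T - A).map f) := by
    rw [Fintype.card_pi, card_map]
    calc ∏ i, Fintype.card (ZMod (2 ^ (k i - card (B i))))ˣ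
        ≤ ∏ i, 2 ^ (k i - card (B i)) :=
          Finset.prod_le_prod' fun i _ => ZMod.card_units_two_pow.trans_le
            (Nat.pow_le_pow_right two_pos (Nat.sub_le _ _))
      _ < 2 ^ card (T - A) := by
          rw [Finset.prod_pow_eq_pow_sum]; exact Nat.pow_lt_pow_right one_lt_two hcard
  obtain ⟨V', hV'le, hV'0, hV'prod⟩ := exists_le_prod_eq_one_of_card_lt
    (fun u => funext fun i => ZMod.units_mul_self_eq_one ((Nat.sub_le _ _).trans (hk i)) (u i))
    _ hcardG
  obtain ⟨V, hVTA, rfl⟩ := exists_le_map_eq hV'le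
  have hVT : V ≤ T := hVTA.trans tsub_le_self
  have hV0 : V ≠ 0 := by rintro rfl; exact hV'0 (map_zero f)
  refine ⟨T - V, (tsub_lt_iff_left hVT).2 (lt_add_of_pos_left T (pos_iff_ne_zero.2 hV0)), ?_⟩
  rw [← add_tsub_cancel_of_le hVT, prod_add, add_tsub_cancel_left]
  refine (prod_mul_prod_eq_of_castHom_eq_one (fun i => (hBA i).trans
    (le_tsub_of_add_le_left (add_le_of_le_tsub_right_of_le hAT hVTA))) hB hBk fun i => ?_).symm
  have hfV : (V.map fun x => (f x i : ZMod (2 ^ (k i - card (B i))))).prod = 1 := by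
    simpa only [map_multiset_prod, map_map, map_one, Function.comp_def, Units.coeHom_apply,
      Pi.evalMonoidHom_apply] using
      congrArg (fun u => Units.coeHom _ (Pi.evalMonoidHom _ i u)) hV'prod
  rw [Pi.multiset_prod_apply, map_multiset_prod, map_map, ← hfV]
  exact congrArg _ (map_congr rfl fun x hx => hf x (mem_of_le hVTA hx) i)

theorem exists_lt_prod_eq_of_sum_lt (hk : ∀ i, k i ≤ 3) (T : Multiset (∀ i, ZMod (2 ^ k i)))
    (hT : ∑ i, k i < card T) : ∃ T' < T, T'.prod = T.prod := by
  classical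
  set N := fun i => T.filter fun x => ¬IsUnit (x i)
  choose B hBN hBcard using fun i => exists_le_card_eq (min_le_right (k i) (card (N i)))
  have hBk : ∀ i, card (B i) ≤ k i := fun i => (hBcard i).trans_le (min_le_left _ _)
  set A := Finset.univ.sup B
  have hAT : A ≤ T := Finset.sup_le fun i _ => (hBN i).trans (filter_le _ _)
  have hBA : ∀ i, B i ≤ A := fun i => Finset.le_sup (Finset.mem_univ i)
  refine exists_lt_prod_eq_of_absorbing hk hAT hBA
    (fun i x hx => (mem_filter.1 (mem_of_le (hBN i) hx)).2) hBk ?_ ?_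
  · -- if `B i` has fewer than `k i` elements, it contains every `x` with non-unit `x i`
    intro x hx i hbi
    by_contra hxi
    have hBi : B i = N i := eq_of_le_of_card_le (hBN i) (by have := hBcard i; omega)
    have hcount : count x T ≤ count x A :=
      calc count x T = count x (N i) := by simp [N, hxi]
        _ = count x (B i) := by rw [hBi]
        _ ≤ count x A := count_le_of_le x (hBA i)
    rw [← count_pos, count_sub] at hx
    omega
  · have : card A ≤ ∑ i, card (B i) := card_finsetSup_le Finset.univ B
    have : ∑ i, card (B i) ≤ ∑ i, k i := Finset.sum_le_sum fun i _ => hBk i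
    rw [Finset.sum_tsub_distrib _ fun i _ => hBk i, card_sub hAT]
    omega

variable [DecidableEq ι]

theorem prod_ne_of_lt_map_mulSingle_two (T' : Multiset (∀ i, ZMod (2 ^ k i)))
    (hlt : T' < (∑ i, replicate (k i) i).map fun j => Pi.mulSingle j 2) :
    T'.prod ≠ ((∑ i, replicate (k i) i).map fun j => Pi.mulSingle j 2).prod := by
  intro heq
  obtain ⟨s, hs, rfl⟩ := exists_le_map_eq hlt.le
  have hcount : ∀ i, count i (∑ j, replicate (k j) j) = k i := by
    simp [count_sum', count_replicate]
  rw [Pi.prod_map_mulSingle, Pi.prod_map_mulSingle] at heq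
  refine hlt.ne (congrArg _ (ext.2 fun i => ZMod.two_pow_injOn ?_ (hcount i).le (congrFun heq i)))
  exact (count_le_of_le i hs).trans (hcount i).le

theorem davenportM_pi_zmod_two_pow (hk : ∀ i, k i ≤ 3) :
    DavenportM (∀ i, ZMod (2 ^ k i)) = ∑ i, k i + 1 :=
  davenportM_eq (exists_lt_prod_eq_of_sum_lt hk) ⟨_, by simp, prod_ne_of_lt_map_mulSingle_two⟩

theorem davenportG_units_pi_zmod_two_pow (hk : ∀ i, k i ≤ 3) :
    DavenportG (∀ i, ZMod (2 ^ k i))ˣ = ∑ i, (k i - 1) + 1 := by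
  refine davenportG_eq_of_mul_self_eq_one (fun u => MulEquiv.piUnits.injective ?_) ?_
  · rw [map_mul, map_one]
    exact funext fun i => ZMod.units_mul_self_eq_one (hk i) _
  · rw [Fintype.card_congr MulEquiv.piUnits.toEquiv, Fintype.card_pi,
      ← Finset.prod_pow_eq_pow_sum]
    exact Finset.prod_congr rfl fun i _ => ZMod.card_units_two_pow

end PiZModTwoPow

def ringRExponent (r₁ r₂ r₃ : ℕ) : Fin r₁ ⊕ Fin r₂ ⊕ Fin r₃ → ℕ :=
  Sum.elim (fun _ => 3) (Sum.elim (fun _ => 2) fun _ => 1)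

-- `ZMod (2 ^ 3)` and `ZMod 8` (etc.) are definitionally equal, so no cast is needed.
def piEquivRingR (r₁ r₂ r₃ : ℕ) :
    (∀ i, ZMod (2 ^ ringRExponent r₁ r₂ r₃ i)) ≃* RingR r₁ r₂ r₃ :=
  (MulEquiv.sumPiEquivProdPi _).trans
    (MulEquiv.prodCongr (MulEquiv.refl _) (MulEquiv.sumPiEquivProdPi _))

theorem davenport_eq_units_add_delta_Z8Z4Z2_general
    (r₁ r₂ r₃ : ℕ) :
    DavenportM (RingR r₁ r₂ r₃)
      = DavenportG (RingR r₁ r₂ r₃)ˣ + (r₁ + r₂ + r₃) := by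
  have hk : ∀ i, ringRExponent r₁ r₂ r₃ i ≤ 3 := by
    rintro (_ | _ | _) <;> simp [ringRExponent]
  rw [← davenportM_congr (piEquivRingR r₁ r₂ r₃), davenportM_pi_zmod_two_pow hk,
    ← davenportG_congr (Units.mapEquiv (piEquivRingR r₁ r₂ r₃)),
    davenportG_units_pi_zmod_two_pow hk]
  simp [ringRExponent, Fintype.sum_sum_type]
  ring

theorem davenport_eq_units_add_delta_Z8Z4Z2
    (r₁ r₂ r₃ : ℕ) (h : 0 < r₁ + r₂ + r₃) :
    DavenportM (RingR r₁ r₂ r₃)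
      = DavenportG (RingR r₁ r₂ r₃)ˣ + (r₁ + r₂ + r₃) :=
  davenport_eq_units_add_delta_Z8Z4Z2_general r₁ r₂ r₃
end
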